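/- Fix $p\in(0,1/2]$ and $k\ge 1$. There exists $\theta=\theta(p,k)>0$ (one may take $\theta=\sqrt{p}/(5Ck5^k)$ for an absolute constant $C$) such that for every $k\times n$ real matrix $M$ with orthonormal rows and $x$ an $n$-dimensional random vector with independent $\operatorname{Ber}(p)$ components, $\mathcal{L}(Mx,\theta)\le(1-p)^k$. -/

import Mathlib

open scoped BigOperators Matrix Matrix.Norms.L2Operator

attribute [local instance] Classical.propDecidable

/-- Probability, under i.i.d. `Ber(p)` coordinates indexed by `ι` (value `1` with
probability `p`, value `0` with probability `1 - p`), of the event `E`. -/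
noncomputable def berProb (p : ℝ) {ι : Type*} [Fintype ι] [DecidableEq ι]
    (E : (ι → ℝ) → Prop) : ℝ :=
  ∑ f : ι → Bool,
    (if E (fun i => if f i then 1 else 0) then ∏ i, (if f i then p else 1 - p) else 0)

/-- Euclidean norm on `N → ℝ`. -/
noncomputable def enorm2 {N : Type*} [Fintype N] (x : N → ℝ) : ℝ :=
  Real.sqrt (∑ i, (x i) ^ 2)

/-- Lévy concentration function of the `ℝ^N`-valued function `ξ` of i.i.d. `Ber(p)` inputs. -/
noncomputable def levy (p : ℝ) {ι : Type*} [Fintype ι] [DecidableEq ι] {N : Type*} [Fintype N]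
    (ξ : (ι → ℝ) → (N → ℝ)) (r : ℝ) : ℝ :=
  ⨆ z : N → ℝ, berProb p (fun v => enorm2 (fun i => ξ v i - z i) ≤ r)

/-!
If some unit vector `u` puts mass at least `1/2` on the columns of `M` of length at most `τ`,
then `⟪u, Mx⟫` is a Bernoulli sum with many small coefficients, and Esseen's inequality
(integrate the characteristic function against the triangle `1 - t/T`, and use
`|p e^{iθ} + 1 - p| ≤ exp (-p(1-p)(1 - cos θ))`) bounds its small-ball probability at scale `τ`
by `12 τ / √(p(1-p)) = 2^{-k}`.

Otherwise every unit vector correlates with one of the at most `k/τ²` long columns, and greedily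
we find columns `M_{σ 1}, …, M_{σ k}` and unit vectors `U_m` with `|⟪U_m, M_{σ m}⟫|` large and
`U_m ⟂ M_{σ m'}` for `m' < m`. Two `0/1` vectors in a small ball that agree off `σ` must then
agree everywhere (test with `U_L` at the last coordinate `σ L` where they differ), so given the
coordinates off `σ` at most one configuration of the `k` coordinates on `σ` lies in the ball, and
it has conditional probability at most `(1 - p)^k`.
-/

open Real

section FejerKernel

noncomputable def fejerKernel (T y : ℝ) : ℝ :=
  ∫ t in (0 : ℝ)..T, (1 - t / T) * cos (t * y)

lemma hasDerivAt_fejerKernel_primitive {T y : ℝ} (hT : T ≠ 0) (hy : y ≠ 0) (t : ℝ) :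
    HasDerivAt (fun t => (1 - t / T) * (sin (t * y) / y) - cos (t * y) / (T * y ^ 2))
      ((1 - t / T) * cos (t * y)) t := by
  have hty : HasDerivAt (fun t : ℝ => t * y) y t := by
    simpa using (hasDerivAt_id t).mul_const y
  have hlin : HasDerivAt (fun t : ℝ => 1 - t / T) (-(1 / T)) t := by
    simpa using ((hasDerivAt_id t).div_const T).const_sub 1
  refine ((hlin.mul (((hasDerivAt_sin _).comp t hty).div_const y)).sub
    (((hasDerivAt_cos _).comp t hty).div_const (T * y ^ 2))).congr_deriv ?_
  simp only [Function.comp_apply]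
  field_simp
  ring

lemma fejerKernel_eq {T y : ℝ} (hT : T ≠ 0) (hy : y ≠ 0) :
    fejerKernel T y = (1 - cos (T * y)) / (T * y ^ 2) := by
  rw [fejerKernel, intervalIntegral.integral_eq_sub_of_hasDerivAt
    (fun t _ => hasDerivAt_fejerKernel_primitive hT hy t)
    (by apply Continuous.intervalIntegrable; fun_prop)]
  field_simp
  simp only [sub_self, mul_zero, zero_mul, zero_sub, sub_zero, sin_zero, cos_zero, sub_neg_eq_add]
  ring

lemma integral_one_sub_div {T : ℝ} (hT : T ≠ 0) : ∫ t in (0 : ℝ)..T, (1 - t / T) = T / 2 := by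
  rw [intervalIntegral.integral_sub intervalIntegrable_const
    (intervalIntegral.intervalIntegrable_id.div_const T), intervalIntegral.integral_const,
    intervalIntegral.integral_div, integral_id, smul_eq_mul]
  field_simp
  ring

lemma fejerKernel_nonneg {T : ℝ} (hT : 0 < T) (y : ℝ) : 0 ≤ fejerKernel T y := by
  rcases eq_or_ne y 0 with rfl | hy
  · simp only [fejerKernel, mul_zero, cos_zero, mul_one, integral_one_sub_div hT.ne']
    positivity
  · rw [fejerKernel_eq hT.ne' hy]
    have := cos_le_one (T * y)
    exact div_nonneg (by linarith) (by positivity)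

lemma le_fejerKernel {T y : ℝ} (hT : 0 < T) (hy : |y| * T ≤ 1) : T / 4 ≤ fejerKernel T y := by
  calc T / 4 = ∫ t in (0 : ℝ)..T, (1 - t / T) * (1 / 2) := by
        rw [intervalIntegral.integral_mul_const, integral_one_sub_div hT.ne']; ring
    _ ≤ fejerKernel T y := by
      refine intervalIntegral.integral_mono_on hT.le
        (by apply Continuous.intervalIntegrable; fun_prop)
        (by apply Continuous.intervalIntegrable; fun_prop) fun t ht => ?_
      have h1 : 0 ≤ 1 - t / T := by rw [sub_nonneg, div_le_one hT]; exact ht.2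
      have h2 : |t * y| ≤ 1 := by
        rw [abs_mul, abs_of_nonneg ht.1]
        nlinarith [mul_le_mul_of_nonneg_right ht.2 (abs_nonneg y)]
      have h3 : (t * y) ^ 2 ≤ 1 := by rw [← sq_abs]; exact pow_le_one₀ (abs_nonneg _) h2
      gcongr
      linarith [one_sub_sq_div_two_le_cos (x := t * y)]

end FejerKernel

section Bernoulli

variable {ι : Type*}

def boolVec (f : ι → Bool) : ι → ℝ := fun i => if f i then 1 else 0

lemma boolVec_injective : Function.Injective (boolVec : (ι → Bool) → ι → ℝ) := by
  intro f g h
  funext i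
  have := congrFun h i
  cases hf : f i <;> cases hg : g i <;> simp_all [boolVec]

lemma one_le_abs_boolVec_sub (f g : ι → Bool) (i : ι) (h : boolVec f i - boolVec g i ≠ 0) :
    1 ≤ |boolVec f i - boolVec g i| := by
  cases hf : f i <;> cases hg : g i <;> simp_all [boolVec]

variable [Fintype ι] {p : ℝ}

def berWeight (p : ℝ) (f : ι → Bool) : ℝ := ∏ i, if f i then p else 1 - p

lemma berWeight_nonneg (hp0 : 0 ≤ p) (hp1 : p ≤ 1) (f : ι → Bool) : 0 ≤ berWeight p f :=
  Finset.prod_nonneg fun i _ => by split <;> linarith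

variable [DecidableEq ι]

lemma berProb_eq_sum (E : (ι → ℝ) → Prop) :
    berProb p E = ∑ f, if E (boolVec f) then berWeight p f else 0 := rfl

lemma sum_prod_bool {R : Type*} [CommSemiring R] (g : ι → Bool → R) :
    ∑ f : ι → Bool, ∏ i, g i (f i) = ∏ i, (g i true + g i false) := by
  rw [← Fintype.prod_sum]
  simp only [Fintype.sum_bool]

lemma berProb_mono (hp0 : 0 ≤ p) (hp1 : p ≤ 1) {E E' : (ι → ℝ) → Prop}
    (h : ∀ v, E v → E' v) : berProb p E ≤ berProb p E' := by
  refine Finset.sum_le_sum fun f _ => ?_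
  split_ifs with hE hE'
  · rfl
  · exact absurd (h _ hE) hE'
  · exact berWeight_nonneg hp0 hp1 f
  · rfl

lemma mul_berProb_le_sum (hp0 : 0 ≤ p) (hp1 : p ≤ 1) {E : (ι → ℝ) → Prop} {K : (ι → ℝ) → ℝ}
    {c : ℝ} (hK : ∀ v, 0 ≤ K v) (hE : ∀ v, E v → c ≤ K v) :
    c * berProb p E ≤ ∑ f, berWeight p f * K (boolVec f) := by
  rw [berProb_eq_sum, Finset.mul_sum]
  refine Finset.sum_le_sum fun f _ => ?_
  split_ifs with hf
  · rw [mul_comm]; exact mul_le_mul_of_nonneg_left (hE _ hf) (berWeight_nonneg hp0 hp1 f)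
  · rw [mul_zero]; exact mul_nonneg (berWeight_nonneg hp0 hp1 f) (hK _)

theorem berProb_le_pow_card (hp0 : 0 ≤ p) (hp : p ≤ 1 / 2) (S : Finset ι)
    {E : (ι → ℝ) → Prop} (hE : ∀ f g : ι → Bool, E (boolVec f) → E (boolVec g) →
      (∀ i ∉ S, f i = g i) → f = g) :
    berProb p E ≤ (1 - p) ^ S.card := by
  -- the law of `x` with its `S`-coordinates frozen to `false`
  set ν : (ι → Bool) → ℝ := fun g => ∏ i, if i ∈ S then (if g i then 0 else 1)
    else (if g i then p else 1 - p)
  set reset : (ι → Bool) → (ι → Bool) := fun f i => if i ∈ S then false else f i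
  have hν0 : ∀ g, 0 ≤ ν g := fun g => Finset.prod_nonneg fun i _ => by split_ifs <;> linarith
  have hν1 : ∑ g, ν g = 1 := by
    rw [sum_prod_bool (fun i b => if i ∈ S then (if b then 0 else 1) else (if b then p else 1 - p))]
    exact Finset.prod_eq_one fun i _ => by by_cases hi : i ∈ S <;> simp [hi]
  have hweight : ∀ f, berWeight p f ≤ (1 - p) ^ S.card * ν (reset f) := by
    intro f
    calc berWeight p f ≤ ∏ i, (if i ∈ S then 1 - p else 1) * (if i ∈ S then 1 else
          (if f i then p else 1 - p)) :=
          Finset.prod_le_prod (fun i _ => by split_ifs <;> linarith)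
            fun i _ => by split_ifs <;> linarith
      _ = (1 - p) ^ S.card * ν (reset f) := by
          rw [Finset.prod_mul_distrib, Finset.prod_ite_mem, Finset.univ_inter, Finset.prod_const]
          congr 1
          exact Finset.prod_congr rfl fun i _ => by by_cases hi : i ∈ S <;> simp [reset, hi]
  set F := Finset.univ.filter fun f : ι → Bool => E (boolVec f)
  have hinj : Set.InjOn reset F := fun f hf g hg hfg => hE f g (by simpa [F] using hf)
    (by simpa [F] using hg) fun i hi => by simpa [reset, hi] using congrFun hfg i
  calc berProb p E = ∑ f ∈ F, berWeight p f := by rw [berProb_eq_sum, Finset.sum_filter]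
    _ ≤ ∑ f ∈ F, (1 - p) ^ S.card * ν (reset f) := Finset.sum_le_sum fun f _ => hweight f
    _ = (1 - p) ^ S.card * ∑ g ∈ F.image reset, ν g := by
        rw [Finset.sum_image hinj, Finset.mul_sum]
    _ ≤ (1 - p) ^ S.card * ∑ g, ν g := by
        gcongr
        · exact pow_nonneg (by linarith) _
        · exact fun g _ _ => hν0 g
        · exact Finset.subset_univ _
    _ = (1 - p) ^ S.card := by rw [hν1, mul_one]

end Bernoulli

section Esseen

open Complex in
lemma norm_bernoulli_charFun_le (p θ : ℝ) :
    ‖(p : ℂ) * exp (↑θ * I) + (1 - p)‖ ≤ Real.exp (-(p * (1 - p)) * (1 - Real.cos θ)) := by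
  have hsq : ‖(p : ℂ) * exp (↑θ * I) + (1 - p)‖ ^ 2 = 1 - 2 * (p * (1 - p)) * (1 - Real.cos θ) := by
    rw [← normSq_eq_norm_sq, normSq_apply]
    simp only [add_re, mul_re, ofReal_re, exp_ofReal_mul_I_re, ofReal_im, exp_ofReal_mul_I_im,
      zero_mul, sub_zero, sub_re, one_re, add_im, mul_im, add_zero, sub_im, one_im, sub_self]
    linear_combination p ^ 2 * Real.sin_sq_add_cos_sq θ
  have hexp : 1 - 2 * (p * (1 - p)) * (1 - Real.cos θ)
      ≤ Real.exp (-(p * (1 - p)) * (1 - Real.cos θ)) ^ 2 := by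
    rw [← Real.exp_nat_mul, Nat.cast_ofNat]
    linarith [Real.add_one_le_exp (2 * (-(p * (1 - p)) * (1 - Real.cos θ)))]
  exact le_of_sq_le_sq (hsq ▸ hexp) (Real.exp_pos _).le

lemma integral_exp_neg_div_pi_sq_mul_sq_le {q T : ℝ} (hq : 0 < q) (hT : 0 ≤ T) :
    ∫ t in (0 : ℝ)..T, Real.exp (-(q / π ^ 2) * t ^ 2) ≤ 3 / √q := by
  have hpi : π ^ 3 ≤ 6 ^ 2 := (pow_le_pow_left₀ pi_pos.le pi_lt_d2.le 3).trans (by norm_num)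
  calc ∫ t in (0 : ℝ)..T, Real.exp (-(q / π ^ 2) * t ^ 2)
      ≤ ∫ t in Set.Ioi 0, Real.exp (-(q / π ^ 2) * t ^ 2) := by
        rw [intervalIntegral.integral_of_le hT]
        exact MeasureTheory.setIntegral_mono_set
          (integrable_exp_neg_mul_sq (by positivity)).integrableOn
          (Filter.Eventually.of_forall fun t => (Real.exp_pos _).le)
          Set.Ioc_subset_Ioi_self.eventuallyLE
    _ = √(π ^ 3 / q) / 2 := by rw [integral_gaussian_Ioi, div_div_eq_mul_div, ← pow_succ']
    _ ≤ √(6 ^ 2 / q) / 2 := by gcongr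
    _ = 3 / √q := by rw [Real.sqrt_div (by positivity), Real.sqrt_sq (by norm_num)]; ring

variable {ι : Type*} [Fintype ι] {p : ℝ}

lemma prod_norm_bernoulli_charFun_le (hp0 : 0 ≤ p) (hp1 : p ≤ 1) {a : ι → ℝ} {S : Finset ι}
    {t : ℝ} (ha : ∀ i ∈ S, |t * a i| ≤ π) (hS : 1 / 2 ≤ ∑ i ∈ S, a i ^ 2) :
    ∏ i, ‖(p : ℂ) * Complex.exp (↑(t * a i) * Complex.I) + (1 - p)‖
      ≤ Real.exp (-(p * (1 - p) / π ^ 2) * t ^ 2) := by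
  have hcos : ∀ i ∈ S, 2 / π ^ 2 * (t * a i) ^ 2 ≤ 1 - Real.cos (t * a i) := fun i hi => by
    linarith [Real.cos_le_one_sub_mul_cos_sq (ha i hi)]
  have hsum : t ^ 2 / π ^ 2 ≤ ∑ i, (1 - Real.cos (t * a i)) :=
    calc t ^ 2 / π ^ 2 ≤ 2 * (t ^ 2 / π ^ 2) * ∑ i ∈ S, a i ^ 2 := by
          nlinarith [mul_nonneg (by positivity : 0 ≤ t ^ 2 / π ^ 2)
            (by linarith : 0 ≤ 2 * ∑ i ∈ S, a i ^ 2 - 1)]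
      _ = ∑ i ∈ S, 2 / π ^ 2 * (t * a i) ^ 2 := by
          rw [Finset.mul_sum]; exact Finset.sum_congr rfl fun i _ => by ring
      _ ≤ ∑ i ∈ S, (1 - Real.cos (t * a i)) := Finset.sum_le_sum hcos
      _ ≤ ∑ i, (1 - Real.cos (t * a i)) :=
          Finset.sum_le_sum_of_subset_of_nonneg (Finset.subset_univ S)
            fun i _ _ => by linarith [Real.cos_le_one (t * a i)]
  calc ∏ i, ‖(p : ℂ) * Complex.exp (↑(t * a i) * Complex.I) + (1 - p)‖
      ≤ ∏ i, Real.exp (-(p * (1 - p)) * (1 - Real.cos (t * a i))) :=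
        Finset.prod_le_prod (fun _ _ => norm_nonneg _) fun i _ => norm_bernoulli_charFun_le p _
    _ = Real.exp (-(p * (1 - p)) * ∑ i, (1 - Real.cos (t * a i))) := by
        rw [← Real.exp_sum, Finset.mul_sum]
    _ ≤ Real.exp (-(p * (1 - p) / π ^ 2) * t ^ 2) := by
        rw [Real.exp_le_exp, neg_mul, neg_mul, neg_le_neg_iff, div_mul_eq_mul_div, mul_div_assoc]
        exact mul_le_mul_of_nonneg_left hsum (mul_nonneg hp0 (by linarith))

variable [DecidableEq ι]

open Complex in
lemma sum_berWeight_mul_exp (a : ι → ℝ) (t : ℝ) :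
    ∑ f, (berWeight p f : ℂ) * exp (↑(t * (a ⬝ᵥ boolVec f)) * I)
      = ∏ i, (p * exp (↑(t * a i) * I) + (1 - p)) := by
  have hterm : ∀ f : ι → Bool, (berWeight p f : ℂ) * exp (↑(t * (a ⬝ᵥ boolVec f)) * I)
      = ∏ i, if f i then p * exp (↑(t * a i) * I) else 1 - p := by
    intro f
    simp only [berWeight, boolVec, dotProduct, Finset.mul_sum, ofReal_sum, Finset.sum_mul,
      Complex.exp_sum, ofReal_prod, ← Finset.prod_mul_distrib]
    refine Finset.prod_congr rfl fun i _ => ?_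
    split_ifs <;> simp
  simp_rw [hterm]
  exact (sum_prod_bool fun i b => if b then (p : ℂ) * exp (↑(t * a i) * I) else 1 - p).trans
    (by simp)

open Complex in
lemma sum_berWeight_mul_cos_le (a : ι → ℝ) (z t : ℝ) :
    ∑ f, berWeight p f * Real.cos (t * (a ⬝ᵥ boolVec f - z))
      ≤ ∏ i, ‖(p : ℂ) * exp (↑(t * a i) * I) + (1 - p)‖ := by
  have hre : ∀ f : ι → Bool, berWeight p f * Real.cos (t * (a ⬝ᵥ boolVec f - z))
      = (exp (↑(-(t * z)) * I) * ((berWeight p f : ℂ) * exp (↑(t * (a ⬝ᵥ boolVec f)) * I))).re := by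
    intro f
    rw [← mul_assoc, mul_comm _ (berWeight p f : ℂ), mul_assoc, ← Complex.exp_add, ← add_mul,
      ← ofReal_add, re_ofReal_mul, exp_ofReal_mul_I_re]
    ring_nf
  simp_rw [hre, ← re_sum, ← Finset.mul_sum, sum_berWeight_mul_exp, ← norm_prod]
  refine (re_le_norm _).trans ?_
  rw [norm_mul, norm_exp_ofReal_mul_I, one_mul]

lemma sum_berWeight_mul_fejerKernel (X : (ι → Bool) → ℝ) (T : ℝ) :
    ∑ f, berWeight p f * fejerKernel T (X f)
      = ∫ t in (0 : ℝ)..T, (1 - t / T) * ∑ f, berWeight p f * Real.cos (t * X f) := by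
  simp_rw [fejerKernel, ← intervalIntegral.integral_const_mul, Finset.mul_sum]
  rw [intervalIntegral.integral_finsetSum fun f _ => by
    apply Continuous.intervalIntegrable; fun_prop]
  refine Finset.sum_congr rfl fun f _ => intervalIntegral.integral_congr fun t _ => ?_
  ring

theorem berProb_abs_dotProduct_sub_le (hp0 : 0 < p) (hp1 : p < 1) {a : ι → ℝ} {S : Finset ι}
    {τ : ℝ} (hτ : 0 < τ) (ha : ∀ i ∈ S, |a i| ≤ τ) (hS : 1 / 2 ≤ ∑ i ∈ S, a i ^ 2) (z : ℝ) :
    berProb p (fun v => |a ⬝ᵥ v - z| ≤ τ) ≤ 12 * τ / √(p * (1 - p)) := by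
  have hpq : 0 < p * (1 - p) := mul_pos hp0 (by linarith)
  set T := τ⁻¹ with hTdef
  have hT : 0 < T := inv_pos.2 hτ
  have hmarkov : T / 4 * berProb p (fun v => |a ⬝ᵥ v - z| ≤ τ)
      ≤ ∑ f, berWeight p f * fejerKernel T (a ⬝ᵥ boolVec f - z) :=
    mul_berProb_le_sum (K := fun v => fejerKernel T (a ⬝ᵥ v - z)) hp0.le hp1.le
      (fun _ => fejerKernel_nonneg hT _) fun v hv =>
      le_fejerKernel hT (by rw [hTdef, ← div_eq_mul_inv, div_le_one hτ]; exact hv)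
  have hpointwise : ∀ t ∈ Set.Icc 0 T,
      (1 - t / T) * ∑ f, berWeight p f * Real.cos (t * (a ⬝ᵥ boolVec f - z))
        ≤ Real.exp (-(p * (1 - p) / π ^ 2) * t ^ 2) := by
    intro t ht
    have h0 : 0 ≤ 1 - t / T := by rw [sub_nonneg, div_le_one hT]; exact ht.2
    have h1 : 1 - t / T ≤ 1 := by have := div_nonneg ht.1 hT.le; linarith
    have hta : ∀ i ∈ S, |t * a i| ≤ π := fun i hi => by
      rw [abs_mul, abs_of_nonneg ht.1]
      calc t * |a i| ≤ T * τ := mul_le_mul ht.2 (ha i hi) (abs_nonneg _) hT.le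
        _ = 1 := inv_mul_cancel₀ hτ.ne'
        _ ≤ π := by linarith [pi_gt_three]
    refine (mul_le_mul_of_nonneg_left (sum_berWeight_mul_cos_le a z t) h0).trans
      ((mul_le_of_le_one_left (Finset.prod_nonneg fun _ _ => norm_nonneg _) h1).trans ?_)
    exact prod_norm_bernoulli_charFun_le hp0.le hp1.le hta hS
  have hintegral := (intervalIntegral.integral_mono_on hT.le
    (by apply Continuous.intervalIntegrable; fun_prop)
    (by apply Continuous.intervalIntegrable; fun_prop) hpointwise).trans
    (integral_exp_neg_div_pi_sq_mul_sq_le hpq hT.le)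
  have hfinal := (hmarkov.trans_eq (sum_berWeight_mul_fejerKernel _ T)).trans hintegral
  rw [hTdef, le_div_iff₀ (Real.sqrt_pos.2 hpq)] at hfinal
  rw [le_div_iff₀ (Real.sqrt_pos.2 hpq)]
  field_simp at hfinal
  linarith

end Esseen

section LinearAlgebra

variable {κ ι : Type*} [Fintype κ]

lemma sq_dotProduct_le (u w : κ → ℝ) : (u ⬝ᵥ w) ^ 2 ≤ (u ⬝ᵥ u) * (w ⬝ᵥ w) := by
  simpa only [dotProduct, sq] using Finset.sum_mul_sq_le_sq_mul_sq Finset.univ u w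

lemma sq_vecMul_apply_le (u : κ → ℝ) (M : Matrix κ ι ℝ) (j : ι) :
    (u ᵥ* M) j ^ 2 ≤ (u ⬝ᵥ u) * ∑ i, M i j ^ 2 := by
  simpa only [Matrix.vecMul, dotProduct, sq] using sq_dotProduct_le u fun i => M i j

lemma abs_dotProduct_le_enorm2 {u : κ → ℝ} (hu : u ⬝ᵥ u = 1) (w : κ → ℝ) :
    |u ⬝ᵥ w| ≤ enorm2 w := by
  rw [enorm2, ← Real.sqrt_sq_eq_abs]
  exact Real.sqrt_le_sqrt ((sq_dotProduct_le u w).trans_eq (by rw [hu, one_mul]; simp [dotProduct, sq]))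

lemma abs_dotProduct_sub_le {u : κ → ℝ} (hu : u ⬝ᵥ u = 1) {x y z : κ → ℝ} {θ : ℝ}
    (hx : enorm2 (x - z) ≤ θ) (hy : enorm2 (y - z) ≤ θ) : |u ⬝ᵥ (x - y)| ≤ 2 * θ := by
  have h := abs_sub (u ⬝ᵥ (x - z)) (u ⬝ᵥ (y - z))
  rw [← dotProduct_sub, sub_sub_sub_cancel_right] at h
  linarith [abs_dotProduct_le_enorm2 hu (x - z), abs_dotProduct_le_enorm2 hu (y - z)]

variable [Fintype ι] [DecidableEq κ] {M : Matrix κ ι ℝ}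

lemma vecMul_dotProduct_vecMul_self (hM : M * Mᵀ = 1) (u : κ → ℝ) :
    (u ᵥ* M) ⬝ᵥ (u ᵥ* M) = u ⬝ᵥ u := by
  rw [← Matrix.dotProduct_mulVec, ← Matrix.vecMul_transpose, Matrix.vecMul_vecMul, hM,
    Matrix.vecMul_one]

lemma sum_sum_sq_eq_card (hM : M * Mᵀ = 1) : ∑ j, ∑ i, M i j ^ 2 = Fintype.card κ := by
  have h := congrArg Matrix.trace hM
  rw [Matrix.trace_one, Matrix.trace] at h
  rw [← h]
  simp only [Matrix.diag, Matrix.mul_apply, Matrix.transpose_apply, sq]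
  exact Finset.sum_comm

lemma exists_lt_sq_vecMul_apply (hM : M * Mᵀ = 1) {u : κ → ℝ} (hu : u ⬝ᵥ u = 1) {τ δ : ℝ}
    (hδ : 2 * Fintype.card κ * δ ^ 2 ≤ τ ^ 2)
    (hsmall : ∑ j ∈ Finset.univ.filter (fun j => ∑ i, M i j ^ 2 ≤ τ ^ 2), (u ᵥ* M) j ^ 2 < 1 / 2) :
    ∃ j, δ ^ 2 < (u ᵥ* M) j ^ 2 := by
  by_contra! hall
  have hk : (0 : ℝ) < Fintype.card κ := by
    have : Nonempty κ := by
      by_contra h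
      rw [not_nonempty_iff] at h
      simp [dotProduct] at hu
    exact_mod_cast Fintype.card_pos
  set L := Finset.univ.filter fun j => ¬ ∑ i, M i j ^ 2 ≤ τ ^ 2
  have hlarge : 1 / 2 < ∑ j ∈ L, (u ᵥ* M) j ^ 2 := by
    have := Finset.sum_filter_add_sum_filter_not Finset.univ (fun j => ∑ i, M i j ^ 2 ≤ τ ^ 2)
      fun j => (u ᵥ* M) j ^ 2
    have htot : ∑ j, (u ᵥ* M) j ^ 2 = 1 := by
      simpa only [dotProduct, sq] using (vecMul_dotProduct_vecMul_self hM u).trans hu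
    linarith
  have hbound : 2 * Fintype.card κ * ∑ j ∈ L, (u ᵥ* M) j ^ 2 ≤ Fintype.card κ :=
    calc 2 * Fintype.card κ * ∑ j ∈ L, (u ᵥ* M) j ^ 2 ≤ ∑ j ∈ L, ∑ i, M i j ^ 2 := by
          rw [Finset.mul_sum]
          refine Finset.sum_le_sum fun j hj => ?_
          have hj : τ ^ 2 < ∑ i, M i j ^ 2 := by simpa [L] using hj
          nlinarith [hall j]
      _ ≤ ∑ j, ∑ i, M i j ^ 2 := Finset.sum_le_sum_of_subset_of_nonneg (Finset.subset_univ _)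
          fun j _ _ => by positivity
      _ = Fintype.card κ := sum_sum_sq_eq_card hM
  nlinarith

end LinearAlgebra

section Triangular

variable {κ ι : Type*} [Fintype κ]

lemma exists_unit_orthogonal {l : ℕ} (hl : l < Fintype.card κ) (c : Fin l → κ → ℝ) :
    ∃ u : κ → ℝ, u ⬝ᵥ u = 1 ∧ ∀ m, u ⬝ᵥ c m = 0 := by
  have hker : LinearMap.ker (Matrix.of c).mulVecLin ≠ ⊥ :=
    LinearMap.ker_ne_bot_of_finrank_lt (by simpa using hl)
  obtain ⟨w, hw, hw0⟩ := Submodule.exists_mem_ne_zero_of_ne_bot hker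
  have hww : 0 < w ⬝ᵥ w :=
    lt_of_le_of_ne (dotProduct_self_star_nonneg w) (Ne.symm (dotProduct_self_eq_zero.not.2 hw0))
  refine ⟨(√(w ⬝ᵥ w))⁻¹ • w, ?_, fun m => ?_⟩
  · rw [smul_dotProduct, dotProduct_smul, smul_eq_mul, smul_eq_mul, ← mul_assoc, ← sq,
      inv_pow, Real.sq_sqrt hww.le, inv_mul_cancel₀ hww.ne']
  · have : c m ⬝ᵥ w = 0 := congrFun (LinearMap.mem_ker.1 hw) m
    rw [smul_dotProduct, dotProduct_comm w (c m), this, smul_zero]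

lemma exists_triangular (M : Matrix κ ι ℝ) {δ : ℝ}
    (h : ∀ u : κ → ℝ, u ⬝ᵥ u = 1 → ∃ j, δ < |(u ᵥ* M) j|) :
    ∀ l ≤ Fintype.card κ, ∃ (σ : Fin l → ι) (U : Fin l → κ → ℝ),
      (∀ m, U m ⬝ᵥ U m = 1 ∧ δ < |(U m ᵥ* M) (σ m)|) ∧
        ∀ m m', m' < m → (U m ᵥ* M) (σ m') = 0 := by
  intro l
  induction l with
  | zero => exact fun _ => ⟨Fin.elim0, Fin.elim0, fun m => m.elim0, fun m => m.elim0⟩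
  | succ l ih =>
    intro hl
    obtain ⟨σ, U, hU, htri⟩ := ih (by omega)
    obtain ⟨u, hu, horth⟩ := exists_unit_orthogonal hl fun m i => M i (σ m)
    obtain ⟨j, hj⟩ := h u hu
    refine ⟨Fin.snoc σ j, Fin.snoc U u, fun m => ?_, fun m m' hm' => ?_⟩
    · induction m using Fin.lastCases <;> simp [hu, hj, hU]
    · induction m using Fin.lastCases with
      | last =>
        induction m' using Fin.lastCases with
        | last => exact absurd hm' (lt_irrefl _)
        | cast m' => simpa [Matrix.vecMul] using horth m'
      | cast m =>
        induction m' using Fin.lastCases with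
        | last => exact absurd hm' (Fin.castSucc_lt_last m).not_gt
        | cast m' => simpa using htri m m' (by simpa using hm')

variable {l : ℕ} {σ : Fin l → ι} {c : Fin l → ι → ℝ} {δ : ℝ}

omit [Fintype κ] in
lemma injective_of_triangular (hδ : 0 ≤ δ) (hdiag : ∀ m, δ < |c m (σ m)|)
    (htri : ∀ m m', m' < m → c m (σ m') = 0) : Function.Injective σ := by
  intro a b hab
  by_contra hne
  wlog h : a < b generalizing a b
  · exact this hab.symm (Ne.symm hne) (lt_of_le_of_ne (not_lt.1 h) (Ne.symm hne))
  have := hdiag b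
  rw [← hab, htri b a h, abs_zero] at this
  linarith

omit [Fintype κ] in
lemma exists_lt_abs_dotProduct_of_triangular [Fintype ι] (hdiag : ∀ m, δ < |c m (σ m)|)
    (htri : ∀ m m', m' < m → c m (σ m') = 0) {d : ι → ℝ} (hd : d ≠ 0)
    (hsupp : ∀ j ∉ Set.range σ, d j = 0) (hd1 : ∀ j, d j ≠ 0 → 1 ≤ |d j|) :
    ∃ m, δ < |c m ⬝ᵥ d| := by
  obtain ⟨j, hj⟩ := Function.ne_iff.1 hd
  obtain ⟨m, rfl⟩ : j ∈ Set.range σ := by_contra fun h => hj (hsupp j h)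
  obtain ⟨L, hL, hmax⟩ := Finset.exists_max_image (Finset.univ.filter fun m => d (σ m) ≠ 0) id
    ⟨m, by simpa using hj⟩
  have hdL : d (σ L) ≠ 0 := by simpa using hL
  -- `L` is the last index with `d (σ L) ≠ 0`, so only the diagonal term of `c L ⬝ᵥ d` survives
  have hsum : c L ⬝ᵥ d = c L (σ L) * d (σ L) := by
    refine Fintype.sum_eq_single (σ L) fun j hj => ?_
    by_cases hr : j ∈ Set.range σ
    · obtain ⟨m, rfl⟩ := hr
      rcases lt_or_gt_of_ne (fun h : m = L => hj (h ▸ rfl)) with hlt | hgt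
      · rw [htri L m hlt, zero_mul]
      · have : d (σ m) = 0 := by_contra fun h => (hmax m (by simpa using h)).not_gt hgt
        rw [this, mul_zero]
    · rw [hsupp j hr, mul_zero]
  refine ⟨L, ?_⟩
  rw [hsum, abs_mul]
  nlinarith [hdiag L, hd1 _ hdL, abs_nonneg (c L (σ L))]

end Triangular

section SmallBall

variable {κ ι : Type*} [Fintype κ] [Fintype ι] [DecidableEq ι] {p : ℝ} {M : Matrix κ ι ℝ}

theorem berProb_enorm2_mulVec_sub_le_of_forall_lt_abs (hp0 : 0 ≤ p) (hp : p ≤ 1 / 2)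
    {θ : ℝ} (hθ : 0 ≤ θ) (hM : ∀ u : κ → ℝ, u ⬝ᵥ u = 1 → ∃ j, 2 * θ < |(u ᵥ* M) j|)
    (z : κ → ℝ) :
    berProb p (fun v => enorm2 (M *ᵥ v - z) ≤ θ) ≤ (1 - p) ^ Fintype.card κ := by
  obtain ⟨σ, U, hdiag, htri⟩ := exists_triangular M hM _ le_rfl
  have hσ := injective_of_triangular (by linarith) (fun m => (hdiag m).2) htri
  have hcard : (Finset.univ.image σ).card = Fintype.card κ := by
    rw [Finset.card_image_of_injective _ hσ, Finset.card_univ, Fintype.card_fin]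
  rw [← hcard]
  refine berProb_le_pow_card hp0 hp _ fun f g hf hg hfg => by_contra fun hne => ?_
  obtain ⟨m, hm⟩ := exists_lt_abs_dotProduct_of_triangular (c := fun m => U m ᵥ* M)
    (fun m => (hdiag m).2) htri (sub_ne_zero.2 fun h => hne (boolVec_injective h))
    (fun j hj => by simp [boolVec, hfg j (by simpa using hj)]) (one_le_abs_boolVec_sub f g)
  rw [← Matrix.dotProduct_mulVec, Matrix.mulVec_sub] at hm
  linarith [abs_dotProduct_sub_le (hdiag m).1 hf hg]

theorem berProb_enorm2_mulVec_sub_le_of_mass (hp0 : 0 < p) (hp1 : p < 1) {u : κ → ℝ}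
    (hu : u ⬝ᵥ u = 1) {τ θ : ℝ} (hτ : 0 < τ) (hθτ : θ ≤ τ)
    (hmass : 1 / 2 ≤ ∑ j ∈ Finset.univ.filter (fun j => ∑ i, M i j ^ 2 ≤ τ ^ 2), (u ᵥ* M) j ^ 2)
    (z : κ → ℝ) :
    berProb p (fun v => enorm2 (M *ᵥ v - z) ≤ θ) ≤ 12 * τ / √(p * (1 - p)) := by
  have hsmall : ∀ j ∈ Finset.univ.filter (fun j => ∑ i, M i j ^ 2 ≤ τ ^ 2), |(u ᵥ* M) j| ≤ τ :=
    fun j hj => abs_le_of_sq_le_sq ((sq_vecMul_apply_le u M j).trans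
      (by rw [hu, one_mul]; simpa using hj)) hτ.le
  refine (berProb_mono hp0.le hp1.le fun v hv => ?_).trans
    (berProb_abs_dotProduct_sub_le hp0 hp1 hτ hsmall hmass (u ⬝ᵥ z))
  rw [← Matrix.dotProduct_mulVec, ← dotProduct_sub]
  exact ((abs_dotProduct_le_enorm2 hu _).trans hv).trans hθτ

theorem berProb_enorm2_mulVec_sub_le_max [DecidableEq κ] (hp0 : 0 < p) (hp : p ≤ 1 / 2)
    (hM : M * Mᵀ = 1) {τ θ : ℝ} (hτ : 0 < τ) (hθ : 0 ≤ θ) (hθτ : θ ≤ τ)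
    (hθτ' : 8 * Fintype.card κ * θ ^ 2 ≤ τ ^ 2) (z : κ → ℝ) :
    berProb p (fun v => enorm2 (M *ᵥ v - z) ≤ θ)
      ≤ max (12 * τ / √(p * (1 - p))) ((1 - p) ^ Fintype.card κ) := by
  by_cases hspread : ∃ u : κ → ℝ, u ⬝ᵥ u = 1 ∧
      1 / 2 ≤ ∑ j ∈ Finset.univ.filter (fun j => ∑ i, M i j ^ 2 ≤ τ ^ 2), (u ᵥ* M) j ^ 2
  · obtain ⟨u, hu, hmass⟩ := hspread
    exact le_max_of_le_left
      (berProb_enorm2_mulVec_sub_le_of_mass hp0 (by linarith) hu hτ hθτ hmass z)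
  · push Not at hspread
    refine le_max_of_le_right
      (berProb_enorm2_mulVec_sub_le_of_forall_lt_abs hp0.le hp hθ (fun u hu => ?_) z)
    obtain ⟨j, hj⟩ := exists_lt_sq_vecMul_apply hM hu (δ := 2 * θ) (by linarith) (hspread u hu)
    exact ⟨j, by rwa [sq_lt_sq, abs_of_nonneg (by positivity)] at hj⟩

end SmallBall

theorem stmt7_general (p : ℝ) (hp : p ∈ Set.Ioc (0 : ℝ) (1 / 2)) (k : ℕ) :
    ∃ θ : ℝ, 0 < θ ∧
      ∀ (n : ℕ) (M : Matrix (Fin k) (Fin n) ℝ), M * Mᵀ = 1 →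
        levy p (fun v => M.mulVec v) θ ≤ (1 - p) ^ k := by
  obtain ⟨hp0, hp1⟩ := hp
  set τ := √(p * (1 - p)) / (12 * 2 ^ k)
  have hpq : 0 < p * (1 - p) := mul_pos hp0 (by linarith)
  have hτ : 0 < τ := by positivity
  have hk : (0 : ℝ) ≤ k := k.cast_nonneg
  set θ := τ / (4 * (k + 1))
  have hθτ : θ ≤ τ := div_le_self hτ.le (by linarith)
  have hθτ' : 8 * Fintype.card (Fin k) * θ ^ 2 ≤ τ ^ 2 :=
    calc 8 * Fintype.card (Fin k) * θ ^ 2 = τ ^ 2 * (k / (2 * (k + 1) ^ 2)) := by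
          simp only [θ, Fintype.card_fin]; field_simp; ring
      _ ≤ τ ^ 2 := mul_le_of_le_one_right (sq_nonneg _)
          ((div_le_one (by positivity)).2 (by nlinarith))
  have hτk : 12 * τ / √(p * (1 - p)) = (1 / 2) ^ k := by
    simp only [τ]; field_simp [(Real.sqrt_pos.2 hpq).ne']; rw [← mul_pow]; norm_num
  refine ⟨θ, by positivity, fun n M hM => ciSup_le fun z => ?_⟩
  refine (berProb_enorm2_mulVec_sub_le_max hp0 hp1 hM hτ (by positivity) hθτ hθτ' z).trans ?_
  rw [hτk, Fintype.card_fin]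
  exact max_le (pow_le_pow_left₀ (by norm_num) (by linarith) k) le_rfl

/-- key Lévy-concentration estimate for matrices with orthonormal rows. -/
theorem stmt7 (p : ℝ) (hp : p ∈ Set.Ioc (0 : ℝ) (1 / 2)) (k : ℕ) (hk : 1 ≤ k) :
    ∃ θ : ℝ, 0 < θ ∧
      ∀ (n : ℕ) (M : Matrix (Fin k) (Fin n) ℝ), M * Mᵀ = 1 →
        levy p (fun v => M.mulVec v) θ ≤ (1 - p) ^ k :=
  stmt7_general p hp k
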